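/- Let L₂, L₃, L₄ be real constants with L₄ ≥ 0, let L̃₁ be a real constant, and assume the coercivity conditions L̃₁ + L₃ > 0, 2L̃₁ − L₃ > 0, and L̃₁ + (5/3)L₂ + (1/6)L₃ > 0. Then there exist constants α > 0 and Λ > 0 such that for every symmetric traceless real 3×3 matrix Q and every triple p = (p¹, p², p³) of symmetric traceless real 3×3 matrices, (α/2)·|p|² ≤ f_E(Q, p) ≤ Λ·(1 + |Q|²)·|p|². -/
import Mathlib


open Matrix

/-- The elastic energy density
`f_E(Q,p) = (L̃₁/2)Σ|pᵏ|² + (L₂/2)Σ_i(Σ_j pʲ_{ij})² + (L₃/2)Σ_{i,j,k} pʲ_{ik}pᵏ_{ij}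
  + (3L₄/(2s₊))·Σ_{n,i,j}(Σ_l Q_{ln}pˡ_{ij})(Σ_k Q_{kn}pᵏ_{ij})`. -/
noncomputable def fE (s L₁ L₂ L₃ L₄ : ℝ)
    (Q : Matrix (Fin 3) (Fin 3) ℝ) (p : Fin 3 → Matrix (Fin 3) (Fin 3) ℝ) : ℝ :=
  L₁ / 2 * (∑ k, ∑ i, ∑ j, (p k i j) ^ 2)
    + L₂ / 2 * (∑ i, (∑ j, p j i j) ^ 2)
    + L₃ / 2 * (∑ i, ∑ j, ∑ k, p j i k * p k i j)
    + 3 * L₄ / (2 * s) *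
        (∑ n, ∑ i, ∑ j, (∑ l, Q l n * p l i j) * (∑ k, Q k n * p k i j))

set_option maxHeartbeats 2000000 in
private lemma cs_decomp (α L₁ L₂ L₃ : ℝ) (p : Fin 3 → Matrix (Fin 3) (Fin 3) ℝ)
    (hsym : ∀ k, (p k)ᵀ = p k) (htr : ∀ k, (p k).trace = 0)
    (h1 : α ≤ L₁ + L₃) (h2 : α ≤ L₁ - L₃ / 2)
    (h3 : α ≤ L₁ + 5 / 3 * L₂ + 1 / 6 * L₃) :
    α * (∑ k, ∑ i, ∑ j, (p k i j) ^ 2)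
      ≤ L₁ * (∑ k, ∑ i, ∑ j, (p k i j) ^ 2) + L₂ * (∑ i, (∑ j, p j i j) ^ 2)
        + L₃ * (∑ i, ∑ j, ∑ k, p j i k * p k i j) := by
  have h10 : ∀ k, p k 1 0 = p k 0 1 := fun k => by
    have h := congrFun (congrFun (hsym k) 1) 0
    simpa [Matrix.transpose_apply] using h.symm
  have h20 : ∀ k, p k 2 0 = p k 0 2 := fun k => by
    have h := congrFun (congrFun (hsym k) 2) 0
    simpa [Matrix.transpose_apply] using h.symm
  have h21 : ∀ k, p k 2 1 = p k 1 2 := fun k => by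
    have h := congrFun (congrFun (hsym k) 2) 1
    simpa [Matrix.transpose_apply] using h.symm
  have h22 : ∀ k, p k 2 2 = -p k 0 0 - p k 1 1 := fun k => by
    have := htr k
    simp only [Matrix.trace, Matrix.diag, Fin.sum_univ_three] at this
    linarith
  simp only [Fin.sum_univ_three, h10, h20, h21, h22]
  have hN7 : (0:ℝ) ≤ (((3/5) * p 0 0 0 + (-2/5) * p 1 0 1 + (-2/5) * p 2 0 2)^2 + ((8/15) * p 0 0 1 + (1/3) * p 1 0 0 + (-2/15) * p 1 1 1 + (-2/15) * p 2 1 2)^2 + ((8/15) * p 0 0 2 + (-2/15) * p 1 1 2 + (7/15) * p 2 0 0 + (2/15) * p 2 1 1)^2 + ((8/15) * p 0 0 1 + (1/3) * p 1 0 0 + (-2/15) * p 1 1 1 + (-2/15) * p 2 1 2)^2 + ((-2/15) * p 0 0 0 + (1/3) * p 0 1 1 + (8/15) * p 1 0 1 + (-2/15) * p 2 0 2)^2 + ((1/3) * p 0 1 2 + (1/3) * p 1 0 2 + (1/3) * p 2 0 1)^2 + ((8/15) * p 0 0 2 + (-2/15) * p 1 1 2 + (7/15) * p 2 0 0 + (2/15)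 * p 2 1 1)^2 + ((1/3) * p 0 1 2 + (1/3) * p 1 0 2 + (1/3) * p 2 0 1)^2 + ((-7/15) * p 0 0 0 + (-1/3) * p 0 1 1 + (-2/15) * p 1 0 1 + (8/15) * p 2 0 2)^2 + ((8/15) * p 0 0 1 + (1/3) * p 1 0 0 + (-2/15) * p 1 1 1 + (-2/15) * p 2 1 2)^2 + ((-2/15) * p 0 0 0 + (1/3) * p 0 1 1 + (8/15) * p 1 0 1 + (-2/15) * p 2 0 2)^2 + ((1/3) * p 0 1 2 + (1/3) * p 1 0 2 + (1/3) * p 2 0 1)^2 + ((-2/15) * p 0 0 0 + (1/3) * p 0 1 1 + (8/15) * p 1 0 1 + (-2/15) * p 2 0 2)^2 + ((-2/5) * p 0 0 1 + (3/5) * p 1 1 1 + (-2/5) * p 2 1 2)^2 + ((-2/15) * p 0 0 2 + (8/15) * p 1 1 2 + (2/15) * p 2 0 0 + (7/15) * p 2 1 1)^2 + ((1/3) * p 0 1 2 + (1/3) * p 1 0 2 + (1/3) * p 2 0 1)^2 + ((-2/15) * p 0 0 2 + (8/15) * p 1 1 2 + (2/15) * p 2 0 0 + (7/15) * p 2 1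 1)^2 + ((-2/15) * p 0 0 1 + (-1/3) * p 1 0 0 + (-7/15) * p 1 1 1 + (8/15) * p 2 1 2)^2 + ((8/15) * p 0 0 2 + (-2/15) * p 1 1 2 + (7/15) * p 2 0 0 + (2/15) * p 2 1 1)^2 + ((1/3) * p 0 1 2 + (1/3) * p 1 0 2 + (1/3) * p 2 0 1)^2 + ((-7/15) * p 0 0 0 + (-1/3) * p 0 1 1 + (-2/15) * p 1 0 1 + (8/15) * p 2 0 2)^2 + ((1/3) * p 0 1 2 + (1/3) * p 1 0 2 + (1/3) * p 2 0 1)^2 + ((-2/15) * p 0 0 2 + (8/15) * p 1 1 2 + (2/15) * p 2 0 0 + (7/15) * p 2 1 1)^2 + ((-2/15) * p 0 0 1 + (-1/3) * p 1 0 0 + (-7/15) * p 1 1 1 + (8/15) * p 2 1 2)^2 + ((-7/15) * p 0 0 0 + (-1/3) * p 0 1 1 + (-2/15) * p 1 0 1 + (8/15) * p 2 0 2)^2 + ((-2/15) * p 0 0 1 + (-1/3) * p 1 0 0 + (-7/15) * p 1 1 1 + (8/15) * p 2 1 2)^2 + ((-2/5) * p 0 0 2 + (-2/5) * p 1 1 2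 + (-3/5) * p 2 0 0 + (-3/5) * p 2 1 1)^2) := by positivity
  have hN5 : (0:ℝ) ≤ (((1/6) * p 0 0 1 + (-1/3) * p 1 0 0 + (-1/6) * p 1 1 1 + (-1/6) * p 2 1 2)^2 + ((1/6) * p 0 0 2 + (-1/6) * p 1 1 2 + (-1/6) * p 2 0 0 + (1/6) * p 2 1 1)^2 + ((1/6) * p 0 0 1 + (-1/3) * p 1 0 0 + (-1/6) * p 1 1 1 + (-1/6) * p 2 1 2)^2 + ((1/3) * p 0 0 0 + (2/3) * p 0 1 1 + (-1/3) * p 1 0 1 + (1/3) * p 2 0 2)^2 + ((2/3) * p 0 1 2 + (-1/3) * p 1 0 2 + (-1/3) * p 2 0 1)^2 + ((1/6) * p 0 0 2 + (-1/6) * p 1 1 2 + (-1/6) * p 2 0 0 + (1/6) * p 2 1 1)^2 + ((2/3) * p 0 1 2 + (-1/3) * p 1 0 2 + (-1/3) * p 2 0 1)^2 + ((-1/3) * p 0 0 0 + (-2/3) * p 0 1 1 + (1/3) * p 1 0 1 + (-1/3) * p 2 0 2)^2 + ((-1/3) * p 0 0 1 + (2/3) * p 1 0 0 + (1/3) * p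 1 1 1 + (1/3) * p 2 1 2)^2 + ((-1/6) * p 0 0 0 + (-1/3) * p 0 1 1 + (1/6) * p 1 0 1 + (-1/6) * p 2 0 2)^2 + ((-1/3) * p 0 1 2 + (2/3) * p 1 0 2 + (-1/3) * p 2 0 1)^2 + ((-1/6) * p 0 0 0 + (-1/3) * p 0 1 1 + (1/6) * p 1 0 1 + (-1/6) * p 2 0 2)^2 + ((-1/6) * p 0 0 2 + (1/6) * p 1 1 2 + (1/6) * p 2 0 0 + (-1/6) * p 2 1 1)^2 + ((-1/3) * p 0 1 2 + (2/3) * p 1 0 2 + (-1/3) * p 2 0 1)^2 + ((-1/6) * p 0 0 2 + (1/6) * p 1 1 2 + (1/6) * p 2 0 0 + (-1/6) * p 2 1 1)^2 + ((1/3) * p 0 0 1 + (-2/3) * p 1 0 0 + (-1/3) * p 1 1 1 + (-1/3) * p 2 1 2)^2 + ((-1/3) * p 0 0 2 + (1/3) * p 1 1 2 + (1/3) * p 2 0 0 + (-1/3) * p 2 1 1)^2 + ((-1/3) * p 0 1 2 + (-1/3) * p 1 0 2 + (2/3) * p 2 0 1)^2 + ((1/6) * p 0 0 0 + (1/3) *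 p 0 1 1 + (-1/6) * p 1 0 1 + (1/6) * p 2 0 2)^2 + ((-1/3) * p 0 1 2 + (-1/3) * p 1 0 2 + (2/3) * p 2 0 1)^2 + ((1/3) * p 0 0 2 + (-1/3) * p 1 1 2 + (-1/3) * p 2 0 0 + (1/3) * p 2 1 1)^2 + ((-1/6) * p 0 0 1 + (1/3) * p 1 0 0 + (1/6) * p 1 1 1 + (1/6) * p 2 1 2)^2 + ((1/6) * p 0 0 0 + (1/3) * p 0 1 1 + (-1/6) * p 1 0 1 + (1/6) * p 2 0 2)^2 + ((-1/6) * p 0 0 1 + (1/3) * p 1 0 0 + (1/6) * p 1 1 1 + (1/6) * p 2 1 2)^2) := by positivity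
  have hN3 : (0:ℝ) ≤ (((2/5) * p 0 0 0 + (2/5) * p 1 0 1 + (2/5) * p 2 0 2)^2 + ((3/10) * p 0 0 1 + (3/10) * p 1 1 1 + (3/10) * p 2 1 2)^2 + ((3/10) * p 0 0 2 + (3/10) * p 1 1 2 + (-3/10) * p 2 0 0 + (-3/10) * p 2 1 1)^2 + ((3/10) * p 0 0 1 + (3/10) * p 1 1 1 + (3/10) * p 2 1 2)^2 + ((-1/5) * p 0 0 0 + (-1/5) * p 1 0 1 + (-1/5) * p 2 0 2)^2 + ((3/10) * p 0 0 2 + (3/10) * p 1 1 2 + (-3/10) * p 2 0 0 + (-3/10) * p 2 1 1)^2 + ((-1/5) * p 0 0 0 + (-1/5) * p 1 0 1 + (-1/5) * p 2 0 2)^2 + ((-1/5) * p 0 0 1 + (-1/5) * p 1 1 1 + (-1/5) * p 2 1 2)^2 + ((3/10) * p 0 0 0 + (3/10) * p 1 0 1 + (3/10) * p 2 0 2)^2 + ((3/10) * p 0 0 0 + (3/10) * p 1 0 1 + (3/10) * p 2 0 2)^2 + ((2/5) * p 0 0 1 + (2/5) * p 1 1 1 + (2/5) * p 2 1 2)^2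 + ((3/10) * p 0 0 2 + (3/10) * p 1 1 2 + (-3/10) * p 2 0 0 + (-3/10) * p 2 1 1)^2 + ((3/10) * p 0 0 2 + (3/10) * p 1 1 2 + (-3/10) * p 2 0 0 + (-3/10) * p 2 1 1)^2 + ((-1/5) * p 0 0 1 + (-1/5) * p 1 1 1 + (-1/5) * p 2 1 2)^2 + ((-1/5) * p 0 0 2 + (-1/5) * p 1 1 2 + (1/5) * p 2 0 0 + (1/5) * p 2 1 1)^2 + ((3/10) * p 0 0 0 + (3/10) * p 1 0 1 + (3/10) * p 2 0 2)^2 + ((-1/5) * p 0 0 2 + (-1/5) * p 1 1 2 + (1/5) * p 2 0 0 + (1/5) * p 2 1 1)^2 + ((3/10) * p 0 0 1 + (3/10) * p 1 1 1 + (3/10) * p 2 1 2)^2 + ((3/10) * p 0 0 0 + (3/10) * p 1 0 1 + (3/10) * p 2 0 2)^2 + ((3/10) * p 0 0 1 + (3/10) * p 1 1 1 + (3/10) * p 2 1 2)^2 + ((2/5) * p 0 0 2 + (2/5) * p 1 1 2 + (-2/5) * p 2 0 0 + (-2/5) * p 2 1 1)^2) := by positivity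
  linarith [mul_nonneg (by linarith : (0:ℝ) ≤ L₁ + L₃ - α) hN7,
    mul_nonneg (by linarith : (0:ℝ) ≤ L₁ - L₃ / 2 - α) hN5,
    mul_nonneg (by linarith : (0:ℝ) ≤ L₁ + 5 / 3 * L₂ + 1 / 6 * L₃ - α) hN3]

set_option maxHeartbeats 2000000 in
private lemma cs_upper (L₁ L₂ L₃ : ℝ) (p : Fin 3 → Matrix (Fin 3) (Fin 3) ℝ)
    (hsym : ∀ k, (p k)ᵀ = p k) (htr : ∀ k, (p k).trace = 0) :
    L₁ * (∑ k, ∑ i, ∑ j, (p k i j) ^ 2) + L₂ * (∑ i, (∑ j, p j i j) ^ 2)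
        + L₃ * (∑ i, ∑ j, ∑ k, p j i k * p k i j)
      ≤ (|L₁| + 5 / 3 * |L₂| + |L₃|) * (∑ k, ∑ i, ∑ j, (p k i j) ^ 2) := by
  have h10 : ∀ k, p k 1 0 = p k 0 1 := fun k => by
    have h := congrFun (congrFun (hsym k) 1) 0
    simpa [Matrix.transpose_apply] using h.symm
  have h20 : ∀ k, p k 2 0 = p k 0 2 := fun k => by
    have h := congrFun (congrFun (hsym k) 2) 0
    simpa [Matrix.transpose_apply] using h.symm
  have h21 : ∀ k, p k 2 1 = p k 1 2 := fun k => by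
    have h := congrFun (congrFun (hsym k) 2) 1
    simpa [Matrix.transpose_apply] using h.symm
  have h22 : ∀ k, p k 2 2 = -p k 0 0 - p k 1 1 := fun k => by
    have := htr k
    simp only [Matrix.trace, Matrix.diag, Fin.sum_univ_three] at this
    linarith
  simp only [Fin.sum_univ_three, h10, h20, h21, h22]
  have hN7 : (0:ℝ) ≤ (((3/5) * p 0 0 0 + (-2/5) * p 1 0 1 + (-2/5) * p 2 0 2)^2 + ((8/15) * p 0 0 1 + (1/3) * p 1 0 0 + (-2/15) * p 1 1 1 + (-2/15) * p 2 1 2)^2 + ((8/15) * p 0 0 2 + (-2/15) * p 1 1 2 + (7/15) * p 2 0 0 + (2/15) * p 2 1 1)^2 + ((8/15) * p 0 0 1 + (1/3) * p 1 0 0 + (-2/15) * p 1 1 1 + (-2/15) * p 2 1 2)^2 + ((-2/15) * p 0 0 0 + (1/3) * p 0 1 1 + (8/15) * p 1 0 1 + (-2/15) * p 2 0 2)^2 + ((1/3) * p 0 1 2 + (1/3) * p 1 0 2 + (1/3) * p 2 0 1)^2 + ((8/15) * p 0 0 2 + (-2/15) * p 1 1 2 + (7/15) * p 2 0 0 + (2/15)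 * p 2 1 1)^2 + ((1/3) * p 0 1 2 + (1/3) * p 1 0 2 + (1/3) * p 2 0 1)^2 + ((-7/15) * p 0 0 0 + (-1/3) * p 0 1 1 + (-2/15) * p 1 0 1 + (8/15) * p 2 0 2)^2 + ((8/15) * p 0 0 1 + (1/3) * p 1 0 0 + (-2/15) * p 1 1 1 + (-2/15) * p 2 1 2)^2 + ((-2/15) * p 0 0 0 + (1/3) * p 0 1 1 + (8/15) * p 1 0 1 + (-2/15) * p 2 0 2)^2 + ((1/3) * p 0 1 2 + (1/3) * p 1 0 2 + (1/3) * p 2 0 1)^2 + ((-2/15) * p 0 0 0 + (1/3) * p 0 1 1 + (8/15) * p 1 0 1 + (-2/15) * p 2 0 2)^2 + ((-2/5) * p 0 0 1 + (3/5) * p 1 1 1 + (-2/5) * p 2 1 2)^2 + ((-2/15) * p 0 0 2 + (8/15) * p 1 1 2 + (2/15) * p 2 0 0 + (7/15) * p 2 1 1)^2 + ((1/3) * p 0 1 2 + (1/3) * p 1 0 2 + (1/3) * p 2 0 1)^2 + ((-2/15) * p 0 0 2 + (8/15) * p 1 1 2 + (2/15) * p 2 0 0 + (7/15) * p 2 1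 1)^2 + ((-2/15) * p 0 0 1 + (-1/3) * p 1 0 0 + (-7/15) * p 1 1 1 + (8/15) * p 2 1 2)^2 + ((8/15) * p 0 0 2 + (-2/15) * p 1 1 2 + (7/15) * p 2 0 0 + (2/15) * p 2 1 1)^2 + ((1/3) * p 0 1 2 + (1/3) * p 1 0 2 + (1/3) * p 2 0 1)^2 + ((-7/15) * p 0 0 0 + (-1/3) * p 0 1 1 + (-2/15) * p 1 0 1 + (8/15) * p 2 0 2)^2 + ((1/3) * p 0 1 2 + (1/3) * p 1 0 2 + (1/3) * p 2 0 1)^2 + ((-2/15) * p 0 0 2 + (8/15) * p 1 1 2 + (2/15) * p 2 0 0 + (7/15) * p 2 1 1)^2 + ((-2/15) * p 0 0 1 + (-1/3) * p 1 0 0 + (-7/15) * p 1 1 1 + (8/15) * p 2 1 2)^2 + ((-7/15) * p 0 0 0 + (-1/3) * p 0 1 1 + (-2/15) * p 1 0 1 + (8/15) * p 2 0 2)^2 + ((-2/15) * p 0 0 1 + (-1/3) * p 1 0 0 + (-7/15) * p 1 1 1 + (8/15) * p 2 1 2)^2 + ((-2/5) * p 0 0 2 + (-2/5) * p 1 1 2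 + (-3/5) * p 2 0 0 + (-3/5) * p 2 1 1)^2) := by positivity
  have hN5 : (0:ℝ) ≤ (((1/6) * p 0 0 1 + (-1/3) * p 1 0 0 + (-1/6) * p 1 1 1 + (-1/6) * p 2 1 2)^2 + ((1/6) * p 0 0 2 + (-1/6) * p 1 1 2 + (-1/6) * p 2 0 0 + (1/6) * p 2 1 1)^2 + ((1/6) * p 0 0 1 + (-1/3) * p 1 0 0 + (-1/6) * p 1 1 1 + (-1/6) * p 2 1 2)^2 + ((1/3) * p 0 0 0 + (2/3) * p 0 1 1 + (-1/3) * p 1 0 1 + (1/3) * p 2 0 2)^2 + ((2/3) * p 0 1 2 + (-1/3) * p 1 0 2 + (-1/3) * p 2 0 1)^2 + ((1/6) * p 0 0 2 + (-1/6) * p 1 1 2 + (-1/6) * p 2 0 0 + (1/6) * p 2 1 1)^2 + ((2/3) * p 0 1 2 + (-1/3) * p 1 0 2 + (-1/3) * p 2 0 1)^2 + ((-1/3) * p 0 0 0 + (-2/3) * p 0 1 1 + (1/3) * p 1 0 1 + (-1/3) * p 2 0 2)^2 + ((-1/3) * p 0 0 1 + (2/3) * p 1 0 0 + (1/3) * p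 1 1 1 + (1/3) * p 2 1 2)^2 + ((-1/6) * p 0 0 0 + (-1/3) * p 0 1 1 + (1/6) * p 1 0 1 + (-1/6) * p 2 0 2)^2 + ((-1/3) * p 0 1 2 + (2/3) * p 1 0 2 + (-1/3) * p 2 0 1)^2 + ((-1/6) * p 0 0 0 + (-1/3) * p 0 1 1 + (1/6) * p 1 0 1 + (-1/6) * p 2 0 2)^2 + ((-1/6) * p 0 0 2 + (1/6) * p 1 1 2 + (1/6) * p 2 0 0 + (-1/6) * p 2 1 1)^2 + ((-1/3) * p 0 1 2 + (2/3) * p 1 0 2 + (-1/3) * p 2 0 1)^2 + ((-1/6) * p 0 0 2 + (1/6) * p 1 1 2 + (1/6) * p 2 0 0 + (-1/6) * p 2 1 1)^2 + ((1/3) * p 0 0 1 + (-2/3) * p 1 0 0 + (-1/3) * p 1 1 1 + (-1/3) * p 2 1 2)^2 + ((-1/3) * p 0 0 2 + (1/3) * p 1 1 2 + (1/3) * p 2 0 0 + (-1/3) * p 2 1 1)^2 + ((-1/3) * p 0 1 2 + (-1/3) * p 1 0 2 + (2/3) * p 2 0 1)^2 + ((1/6) * p 0 0 0 + (1/3) *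 p 0 1 1 + (-1/6) * p 1 0 1 + (1/6) * p 2 0 2)^2 + ((-1/3) * p 0 1 2 + (-1/3) * p 1 0 2 + (2/3) * p 2 0 1)^2 + ((1/3) * p 0 0 2 + (-1/3) * p 1 1 2 + (-1/3) * p 2 0 0 + (1/3) * p 2 1 1)^2 + ((-1/6) * p 0 0 1 + (1/3) * p 1 0 0 + (1/6) * p 1 1 1 + (1/6) * p 2 1 2)^2 + ((1/6) * p 0 0 0 + (1/3) * p 0 1 1 + (-1/6) * p 1 0 1 + (1/6) * p 2 0 2)^2 + ((-1/6) * p 0 0 1 + (1/3) * p 1 0 0 + (1/6) * p 1 1 1 + (1/6) * p 2 1 2)^2) := by positivity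
  have hN3 : (0:ℝ) ≤ (((2/5) * p 0 0 0 + (2/5) * p 1 0 1 + (2/5) * p 2 0 2)^2 + ((3/10) * p 0 0 1 + (3/10) * p 1 1 1 + (3/10) * p 2 1 2)^2 + ((3/10) * p 0 0 2 + (3/10) * p 1 1 2 + (-3/10) * p 2 0 0 + (-3/10) * p 2 1 1)^2 + ((3/10) * p 0 0 1 + (3/10) * p 1 1 1 + (3/10) * p 2 1 2)^2 + ((-1/5) * p 0 0 0 + (-1/5) * p 1 0 1 + (-1/5) * p 2 0 2)^2 + ((3/10) * p 0 0 2 + (3/10) * p 1 1 2 + (-3/10) * p 2 0 0 + (-3/10) * p 2 1 1)^2 + ((-1/5) * p 0 0 0 + (-1/5) * p 1 0 1 + (-1/5) * p 2 0 2)^2 + ((-1/5) * p 0 0 1 + (-1/5) * p 1 1 1 + (-1/5) * p 2 1 2)^2 + ((3/10) * p 0 0 0 + (3/10) * p 1 0 1 + (3/10) * p 2 0 2)^2 + ((3/10) * p 0 0 0 + (3/10) * p 1 0 1 + (3/10) * p 2 0 2)^2 + ((2/5) * p 0 0 1 + (2/5) * p 1 1 1 + (2/5) * p 2 1 2)^2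 + ((3/10) * p 0 0 2 + (3/10) * p 1 1 2 + (-3/10) * p 2 0 0 + (-3/10) * p 2 1 1)^2 + ((3/10) * p 0 0 2 + (3/10) * p 1 1 2 + (-3/10) * p 2 0 0 + (-3/10) * p 2 1 1)^2 + ((-1/5) * p 0 0 1 + (-1/5) * p 1 1 1 + (-1/5) * p 2 1 2)^2 + ((-1/5) * p 0 0 2 + (-1/5) * p 1 1 2 + (1/5) * p 2 0 0 + (1/5) * p 2 1 1)^2 + ((3/10) * p 0 0 0 + (3/10) * p 1 0 1 + (3/10) * p 2 0 2)^2 + ((-1/5) * p 0 0 2 + (-1/5) * p 1 1 2 + (1/5) * p 2 0 0 + (1/5) * p 2 1 1)^2 + ((3/10) * p 0 0 1 + (3/10) * p 1 1 1 + (3/10) * p 2 1 2)^2 + ((3/10) * p 0 0 0 + (3/10) * p 1 0 1 + (3/10) * p 2 0 2)^2 + ((3/10) * p 0 0 1 + (3/10) * p 1 1 1 + (3/10) * p 2 1 2)^2 + ((2/5) * p 0 0 2 + (2/5) * p 1 1 2 + (-2/5) * p 2 0 0 + (-2/5) * p 2 1 1)^2) := by positivity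
  have a1 : L₁ ≤ |L₁| := le_abs_self L₁
  have a2 : -L₂ ≤ |L₂| := neg_le_abs L₂
  have a2' : L₂ ≤ |L₂| := le_abs_self L₂
  have a3 : L₃ ≤ |L₃| := le_abs_self L₃
  have a3' : -L₃ ≤ |L₃| := neg_le_abs L₃
  have b2 : (0:ℝ) ≤ |L₂| := abs_nonneg L₂
  linarith [mul_nonneg (by linarith : (0:ℝ) ≤ |L₁| - L₁ + 5 / 3 * |L₂| + |L₃| - L₃) hN7,
    mul_nonneg (by linarith : (0:ℝ) ≤ |L₁| - L₁ + 5 / 3 * |L₂| + |L₃| + L₃ / 2) hN5,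
    mul_nonneg (by linarith : (0:ℝ) ≤ |L₁| - L₁ + 5 / 3 * |L₂| - 5 / 3 * L₂ + |L₃| - L₃ / 6) hN3]

private lemma cs_T4_le (Q : Matrix (Fin 3) (Fin 3) ℝ) (p : Fin 3 → Matrix (Fin 3) (Fin 3) ℝ) :
    (∑ n, ∑ i, ∑ j, (∑ l, Q l n * p l i j) * (∑ k, Q k n * p k i j))
      ≤ (∑ i, ∑ j, (Q i j) ^ 2) * (∑ l, ∑ i, ∑ j, (p l i j) ^ 2) := by
  have step : ∀ (n i j : Fin 3),
      (∑ l, Q l n * p l i j) * (∑ k, Q k n * p k i j)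
        ≤ (∑ l, (Q l n) ^ 2) * (∑ l, (p l i j) ^ 2) := by
    intro n i j
    have := Finset.sum_mul_sq_le_sq_mul_sq Finset.univ (fun l => Q l n) (fun l => p l i j)
    calc (∑ l, Q l n * p l i j) * (∑ k, Q k n * p k i j)
        = (∑ l, Q l n * p l i j) ^ 2 := by ring
      _ ≤ _ := this
  calc (∑ n, ∑ i, ∑ j, (∑ l, Q l n * p l i j) * (∑ k, Q k n * p k i j))
      ≤ ∑ n, ∑ i, ∑ j, (∑ l, (Q l n) ^ 2) * (∑ l, (p l i j) ^ 2) := by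
        refine Finset.sum_le_sum fun n _ => Finset.sum_le_sum fun i _ =>
          Finset.sum_le_sum fun j _ => step n i j
    _ = (∑ i, ∑ j, (Q i j) ^ 2) * (∑ l, ∑ i, ∑ j, (p l i j) ^ 2) := by
        simp only [Fin.sum_univ_three]
        ring

set_option maxHeartbeats 2000000 in
/-- Coercivity and upper bound of the elastic density: under the conditions
`L̃₁ + L₃ > 0`, `2L̃₁ − L₃ > 0`, `L̃₁ + (5/3)L₂ + (1/6)L₃ > 0` and `L₄ ≥ 0`,
there exist `α > 0` and `Λ > 0` with
`(α/2)|p|² ≤ f_E(Q,p) ≤ Λ(1 + |Q|²)|p|²` for all symmetric traceless `Q`, `p`. -/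
theorem fE_coercive_and_bounded (s : ℝ) (hs : 0 < s)
    (L₁ L₂ L₃ L₄ : ℝ) (hL₄ : 0 ≤ L₄)
    (h₁ : L₁ + L₃ > 0) (h₂ : 2 * L₁ - L₃ > 0)
    (h₃ : L₁ + 5 / 3 * L₂ + 1 / 6 * L₃ > 0) :
    ∃ α > (0 : ℝ), ∃ Λ > (0 : ℝ),
      ∀ (Q : Matrix (Fin 3) (Fin 3) ℝ) (p : Fin 3 → Matrix (Fin 3) (Fin 3) ℝ),
        Qᵀ = Q → Q.trace = 0 →
        (∀ k, (p k)ᵀ = p k) → (∀ k, (p k).trace = 0) →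
        α / 2 * (∑ l, ∑ i, ∑ j, (p l i j) ^ 2) ≤ fE s L₁ L₂ L₃ L₄ Q p ∧
        fE s L₁ L₂ L₃ L₄ Q p
          ≤ Λ * (1 + ∑ i, ∑ j, (Q i j) ^ 2) * (∑ l, ∑ i, ∑ j, (p l i j) ^ 2) := by
  refine ⟨min (L₁ + L₃) (min (L₁ - L₃ / 2) (L₁ + 5 / 3 * L₂ + 1 / 6 * L₃)),
    lt_min h₁ (lt_min (by linarith) h₃),
    (|L₁| + 5 / 3 * |L₂| + |L₃|) / 2 + 3 * L₄ / (2 * s) + 1,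
    by positivity, ?_⟩
  intro Q p hQs hQt hps hpt
  set α := min (L₁ + L₃) (min (L₁ - L₃ / 2) (L₁ + 5 / 3 * L₂ + 1 / 6 * L₃)) with hα
  set Λ := (|L₁| + 5 / 3 * |L₂| + |L₃|) / 2 + 3 * L₄ / (2 * s) + 1 with hΛ
  have hc : (0:ℝ) ≤ 3 * L₄ / (2 * s) := by positivity
  have hT1 : (0:ℝ) ≤ ∑ l, ∑ i, ∑ j, (p l i j) ^ 2 := by positivity
  have hQ2 : (0:ℝ) ≤ ∑ i, ∑ j, (Q i j) ^ 2 := by positivity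
  have hT4 : (0:ℝ) ≤ ∑ n, ∑ i, ∑ j, (∑ l, Q l n * p l i j) * (∑ k, Q k n * p k i j) :=
    Finset.sum_nonneg fun n _ => Finset.sum_nonneg fun i _ => Finset.sum_nonneg fun j _ =>
      mul_self_nonneg _
  have hcore := cs_decomp α L₁ L₂ L₃ p hps hpt (min_le_left _ _)
    (le_trans (min_le_right _ _) (min_le_left _ _))
    (le_trans (min_le_right _ _) (min_le_right _ _))
  have hupper := cs_upper L₁ L₂ L₃ p hps hpt
  have hT4le := cs_T4_le Q p
  simp only [fE]
  constructor
  · have hcT4 : (0:ℝ) ≤ 3 * L₄ / (2 * s) *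
        (∑ n, ∑ i, ∑ j, (∑ l, Q l n * p l i j) * (∑ k, Q k n * p k i j)) :=
      mul_nonneg hc hT4
    linarith
  · have hA : (0:ℝ) ≤ (3 * L₄ / (2 * s) + 1) * (∑ l, ∑ i, ∑ j, (p l i j) ^ 2) := by positivity
    have hB : (0:ℝ) ≤ ((|L₁| + 5 / 3 * |L₂| + |L₃|) / 2 + 1) *
        ((∑ i, ∑ j, (Q i j) ^ 2) * (∑ l, ∑ i, ∑ j, (p l i j) ^ 2)) := by positivity
    have hC : (0:ℝ) ≤ 3 * L₄ / (2 * s) *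
        ((∑ i, ∑ j, (Q i j) ^ 2) * (∑ l, ∑ i, ∑ j, (p l i j) ^ 2)
          - ∑ n, ∑ i, ∑ j, (∑ l, Q l n * p l i j) * (∑ k, Q k n * p k i j)) :=
      mul_nonneg hc (by linarith)
    have expand : Λ * (1 + ∑ i, ∑ j, (Q i j) ^ 2) * (∑ l, ∑ i, ∑ j, (p l i j) ^ 2)
        = Λ * (∑ l, ∑ i, ∑ j, (p l i j) ^ 2)
          + Λ * ((∑ i, ∑ j, (Q i j) ^ 2) * (∑ l, ∑ i, ∑ j, (p l i j) ^ 2)) := by ring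
    rw [expand, hΛ]
    linarith
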